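/- Let A and B be real symmetric positive definite n×n matrices and C an m×n real matrix. Then ‖C B (B A B)^{-1/2}‖ = ‖C A^{-1/2}‖, where ‖·‖ is either the spectral norm or the nuclear norm. -/

import Mathlib

/-!
With `T = A^{1/2}` and `S = (BAB)^{1/2}`, the matrix `U = T B S⁻¹` is orthogonal, because
`U Uᵀ = T B (BAB)⁻¹ B T = T A⁻¹ T = 1`, and `C B S⁻¹ = (C T⁻¹) U`. Right multiplication by an
orthogonal `U` leaves `M Mᵀ` unchanged, hence the spectral norm, and replaces `Mᵀ M` by its
conjugate `Uᵀ (Mᵀ M) U`, which has the same characteristic polynomial, hence the same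
eigenvalues and the same nuclear norm.
-/

open Matrix

/-- The spectral norm (largest singular value) of a matrix. -/
noncomputable def specNorm {m n : Type*} [Fintype m] [Fintype n] [DecidableEq n]
    (A : Matrix m n ℝ) : ℝ :=
  ‖LinearMap.toContinuousLinearMap (Matrix.toEuclideanLin A)‖

/-- The nuclear (trace) norm of a matrix: the sum of its singular values, i.e. of the
square roots of the eigenvalues of `Aᵀ A`. -/
noncomputable def nuclearNorm {m n : Type*} [Fintype m] [Fintype n] [DecidableEq n]
    (A : Matrix m n ℝ) : ℝ :=
  ∑ i, Real.sqrt ((Matrix.isHermitian_conjTranspose_mul_self A).eigenvalues i)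

open scoped ComplexOrder in
/-- The positive semidefinite square root of a positive semidefinite matrix (as defined in
Mathlib of December 2024, where it has since been removed). -/
noncomputable def Matrix.PosSemidef.sqrt {n 𝕜 : Type*} [Fintype n] [RCLike 𝕜] [DecidableEq n]
    {A : Matrix n n 𝕜} (hA : A.PosSemidef) : Matrix n n 𝕜 :=
  hA.1.eigenvectorUnitary.1 * diagonal ((↑) ∘ (√·) ∘ hA.1.eigenvalues) *
  (star hA.1.eigenvectorUnitary : Matrix n n 𝕜)

namespace Matrix

section Sqrt

open scoped ComplexOrder MatrixOrder

variable {𝕜 k : Type*} [RCLike 𝕜] [Fintype k] [DecidableEq k]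

lemma PosSemidef.sqrt_eq_cfcSqrt {S : Matrix k k 𝕜} (hS : S.PosSemidef) :
    hS.sqrt = CFC.sqrt S := by
  rw [CFC.sqrt_eq_cfc, cfc_nnreal_eq_real _ S hS.nonneg, hS.1.cfc_eq]
  simp only [IsHermitian.cfc, PosSemidef.sqrt, Unitary.conjStarAlgAut_apply]
  congr 3
  funext i
  simp [Real.coe_toNNReal', max_eq_left (hS.eigenvalues_nonneg i)]

lemma PosSemidef.sqrt_mul_self {S : Matrix k k 𝕜} (hS : S.PosSemidef) :
    hS.sqrt * hS.sqrt = S := by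
  rw [hS.sqrt_eq_cfcSqrt]
  exact CFC.sqrt_mul_sqrt_self S hS.nonneg

lemma PosSemidef.isHermitian_sqrt {S : Matrix k k 𝕜} (hS : S.PosSemidef) :
    hS.sqrt.IsHermitian := by
  rw [hS.sqrt_eq_cfcSqrt]
  exact (CFC.sqrt_nonneg S).posSemidef.1

lemma PosDef.isUnit_det_sqrt {S : Matrix k k 𝕜} (hS : S.PosDef) :
    IsUnit hS.posSemidef.sqrt.det := by
  have h : IsUnit (hS.posSemidef.sqrt * hS.posSemidef.sqrt).det := by
    rw [hS.posSemidef.sqrt_mul_self]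
    exact hS.isUnit.map detMonoidHom
  rw [det_mul] at h
  exact isUnit_of_mul_isUnit_left h

end Sqrt

lemma conjTranspose_mul_inv_mul_conjTranspose_eq_one {R k : Type*} [CommRing R] [StarRing R]
    [Fintype k] [DecidableEq k] {S W : Matrix k k R} (hS : Sᴴ = S) (hSW : S * S = W * Wᴴ)
    (hW : IsUnit W.det) : (Wᴴ * S⁻¹) * (Wᴴ * S⁻¹)ᴴ = 1 := by
  have hW_star : IsUnit Wᴴ.det := by rw [det_conjTranspose]; exact hW.star
  calc (Wᴴ * S⁻¹) * (Wᴴ * S⁻¹)ᴴ = Wᴴ * (S * S)⁻¹ * W := by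
        rw [conjTranspose_mul, conjTranspose_nonsing_inv, hS, conjTranspose_conjTranspose,
          mul_inv_rev]
        simp only [Matrix.mul_assoc]
    _ = 1 := by
        rw [hSW, mul_inv_rev, ← Matrix.mul_assoc, mul_nonsing_inv _ hW_star, Matrix.one_mul,
          nonsing_inv_mul _ hW]

end Matrix

section Norms

open scoped Matrix.Norms.L2Operator

variable {l k : Type*} [Fintype l] [Fintype k] [DecidableEq k]

lemma specNorm_eq_of_mul_conjTranspose_eq [DecidableEq l] {M N : Matrix l k ℝ}
    (h : M * Mᴴ = N * Nᴴ) : specNorm M = specNorm N := by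
  have hsq (P : Matrix l k ℝ) : ‖P‖ * ‖P‖ = ‖P * Pᴴ‖ := by
    simpa only [conjTranspose_conjTranspose, l2_opNorm_conjTranspose] using
      (l2_opNorm_conjTranspose_mul_self Pᴴ).symm
  exact (mul_self_inj (norm_nonneg M) (norm_nonneg N)).1 (by rw [hsq, hsq, h])

lemma specNorm_mul_of_mul_conjTranspose_eq_one [DecidableEq l] (M : Matrix l k ℝ)
    {U : Matrix k k ℝ} (hU : U * Uᴴ = 1) : specNorm (M * U) = specNorm M :=
  specNorm_eq_of_mul_conjTranspose_eq <| by
    rw [conjTranspose_mul, Matrix.mul_assoc, ← Matrix.mul_assoc U, hU, Matrix.one_mul]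

lemma nuclearNorm_eq_of_charpoly_eq {M N : Matrix l k ℝ}
    (h : (Mᴴ * M).charpoly = (Nᴴ * N).charpoly) : nuclearNorm M = nuclearNorm N := by
  rw [nuclearNorm, nuclearNorm, (IsHermitian.eigenvalues_eq_eigenvalues_iff _ _).2 h]

lemma nuclearNorm_mul_of_mul_conjTranspose_eq_one (M : Matrix l k ℝ) {U : Matrix k k ℝ}
    (hU : U * Uᴴ = 1) : nuclearNorm (M * U) = nuclearNorm M :=
  nuclearNorm_eq_of_charpoly_eq <| by
    rw [conjTranspose_mul, Matrix.mul_assoc, charpoly_mul_comm]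
    simp only [Matrix.mul_assoc, hU, Matrix.mul_one]

end Norms

/-- **Norm switch lemma.**  For real symmetric positive definite `A`, `B` and
any real matrix `C`, one has `‖C B (B A B)^{-1/2}‖ = ‖C A^{-1/2}‖` in both the spectral and
the nuclear norm.  (The hypothesis `hBAB`, positive definiteness of `B A B`, follows from
those of `A` and `B` and is supplied in order to form the square root.) -/
theorem specNorm_nuclearNorm_switch {m n : ℕ} (A B : Matrix (Fin n) (Fin n) ℝ)
    (C : Matrix (Fin m) (Fin n) ℝ) (hA : A.PosDef) (hB : B.PosDef)
    (hBAB : (B * A * B).PosDef) :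
    specNorm (C * B * (hBAB.posSemidef.sqrt)⁻¹) = specNorm (C * (hA.posSemidef.sqrt)⁻¹) ∧
    nuclearNorm (C * B * (hBAB.posSemidef.sqrt)⁻¹) = nuclearNorm (C * (hA.posSemidef.sqrt)⁻¹) := by
  set S := hBAB.posSemidef.sqrt
  set T := hA.posSemidef.sqrt
  have hT : Tᴴ = T := hA.posSemidef.isHermitian_sqrt
  have hT_det : IsUnit T.det := hA.isUnit_det_sqrt
  have hS_sq : S * S = (B * T) * (B * T)ᴴ := by
    rw [hBAB.posSemidef.sqrt_mul_self, conjTranspose_mul, hT, hB.1.eq, Matrix.mul_assoc B T,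
      ← Matrix.mul_assoc T, hA.posSemidef.sqrt_mul_self, Matrix.mul_assoc]
  have hBT_det : IsUnit (B * T).det := by
    rw [det_mul]
    exact (hB.isUnit.map detMonoidHom).mul hT_det
  set U := (B * T)ᴴ * S⁻¹
  have hU : U * Uᴴ = 1 :=
    conjTranspose_mul_inv_mul_conjTranspose_eq_one hBAB.posSemidef.isHermitian_sqrt hS_sq hBT_det
  have hfactor : C * B * S⁻¹ = C * T⁻¹ * U := by
    simp only [U, conjTranspose_mul, hT, hB.1.eq, ← Matrix.mul_assoc,
      nonsing_inv_mul_cancel_right _ _ hT_det]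
  rw [hfactor]
  exact ⟨specNorm_mul_of_mul_conjTranspose_eq_one _ hU,
    nuclearNorm_mul_of_mul_conjTranspose_eq_one _ hU⟩
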